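/- Let B0 A0 A1 ... A_{m+1} B_{m+1} be a convex polygon in the hyperbolic plane with right angles at B0 and B_{m+1}. Let α_k denote the interior angle at A_k for k = 1, ..., m, and let L = |A0A1| + |A1A2| + ... + |A_m A_{m+1}|. Then the sum over k = 1 to m of (π - α_k) is at most π + L. -/

import Mathlib

open Real

/-! Hyperboloid model of the hyperbolic plane `H²` of curvature `-1`:
points are `p : ℝ × ℝ × ℝ` with `mink p p = 1` and `p.1 > 0`, where `mink` is the
Minkowski bilinear form of signature `(+,-,-)`.  Distances satisfy
`cosh (hdist p q) = mink p q` and angles are computed by the hyperbolic cosine law. -/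

/-- Minkowski bilinear form on `ℝ^{1,2}`. -/
def mink (p q : ℝ × ℝ × ℝ) : ℝ := p.1 * q.1 - p.2.1 * q.2.1 - p.2.2 * q.2.2

/-- Inverse hyperbolic cosine. -/
noncomputable def arcosh (x : ℝ) : ℝ := Real.log (x + Real.sqrt (x ^ 2 - 1))

/-- Hyperbolic distance between points of the hyperboloid. -/
noncomputable def hdist (p q : ℝ × ℝ × ℝ) : ℝ := _root_.arcosh (mink p q)

/-- Angle at `p` between the geodesic segments from `p` to `q` and from `p` to `r`. -/
noncomputable def hangle (p q r : ℝ × ℝ × ℝ) : ℝ :=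
  Real.arccos ((mink p q * mink p r - mink q r) /
    (Real.sqrt (mink p q ^ 2 - 1) * Real.sqrt (mink p r ^ 2 - 1)))

/-- The point at signed arclength `s` along the base geodesic line `{x₂ = 0}` (the "lower
line"), moved to (signed) height `h` along the perpendicular at that point. -/
noncomputable def Pt (s h : ℝ) : ℝ × ℝ × ℝ :=
  (Real.cosh s * Real.cosh h, Real.sinh s * Real.cosh h, Real.sinh h)

/-! Dropping the perpendiculars `A_k B_k` cuts the polygon into trapezoids `A_i B_i B_{i+1} A_{i+1}`
with right angles at the base, and `hconvex` says that `α_k` is the sum of the angles at `A_k` of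
the two trapezoids meeting there. Hence `∑ (π - α_k)` equals the sum of the trapezoid areas
`π - θ_i - θ'_i`, minus `π`, plus the two outer angles at `A_0` and `A_{m+1}`, which are at most `π`
each. A trapezoid with base `δ`, heights `h₁, h₂` and upper side `d` has
`tan (area / 2) = sinh δ (sinh h₁ + sinh h₂) / ((1 + cosh δ) (1 + cosh (h₁ - h₂)))`, and this
quantity is at most `sinh (d / 2)`; since `arctan ≤ arsinh` on `[0, ∞)`, the area is at most `d`. -/

lemma mink_comm (p q : ℝ × ℝ × ℝ) : mink p q = mink q p := by
  unfold mink; ring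

lemma hangle_comm (p q r : ℝ × ℝ × ℝ) : hangle p q r = hangle p r q := by
  unfold hangle
  rw [mink_comm q r, mul_comm (mink p q), mul_comm √(mink p q ^ 2 - 1)]

lemma hangle_le_pi (p q r : ℝ × ℝ × ℝ) : hangle p q r ≤ π := arccos_le_pi _

lemma hdist_comm (p q : ℝ × ℝ × ℝ) : hdist p q = hdist q p := by
  unfold hdist; rw [mink_comm]

lemma mink_Pt (s h s' h' : ℝ) :
    mink (Pt s h) (Pt s' h') = cosh (s' - s) * cosh h * cosh h' - sinh h * sinh h' := by
  simp only [mink, Pt, cosh_sub]; ring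

lemma one_le_mink_Pt (s h s' h' : ℝ) : 1 ≤ mink (Pt s h) (Pt s' h') := by
  have hδ := one_le_cosh (s' - s)
  have hcosh := one_le_cosh (h - h')
  rw [cosh_sub] at hcosh
  rw [mink_Pt]
  nlinarith [mul_pos (cosh_pos h) (cosh_pos h')]

lemma cosh_hdist_Pt (s h s' h' : ℝ) :
    cosh (hdist (Pt s h) (Pt s' h')) = mink (Pt s h) (Pt s' h') :=
  cosh_arcosh (one_le_mink_Pt s h s' h')

lemma hdist_Pt_nonneg (s h s' h' : ℝ) : 0 ≤ hdist (Pt s h) (Pt s' h') :=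
  arcosh_nonneg (one_le_mink_Pt s h s' h')

lemma sinh_hdist_Pt_sq (s h s' h' : ℝ) :
    sinh (hdist (Pt s h) (Pt s' h')) ^ 2 =
      (cosh (s' - s) * sinh h * cosh h' - cosh h * sinh h') ^ 2 +
        (cosh h' * sinh (s' - s)) ^ 2 := by
  rw [sinh_sq, cosh_hdist_Pt, mink_Pt]
  linear_combination (cosh (s' - s) ^ 2 * cosh h' ^ 2 - sinh h' ^ 2) * cosh_sq h
    + (cosh (s' - s) ^ 2 - sinh (s' - s) ^ 2) * cosh_sq h' + (1 + sinh h' ^ 2) * cosh_sq (s' - s)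

lemma hangle_Pt_foot_eq_arccos {h : ℝ} (hh : 0 < h) (s s' h' : ℝ) :
    hangle (Pt s h) (Pt s 0) (Pt s' h') =
      arccos ((cosh (s' - s) * sinh h * cosh h' - cosh h * sinh h') /
        sinh (hdist (Pt s h) (Pt s' h'))) := by
  have hfoot : mink (Pt s h) (Pt s 0) = cosh h := by simp [mink_Pt]
  have hbase : mink (Pt s 0) (Pt s' h') = cosh (s' - s) * cosh h' := by simp [mink_Pt]
  have hsinh : √(cosh h ^ 2 - 1) = sinh h := by
    rw [← sinh_sq, sqrt_sq (sinh_pos_iff.2 hh).le]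
  have hsinhd : √(mink (Pt s h) (Pt s' h') ^ 2 - 1) = sinh (hdist (Pt s h) (Pt s' h')) :=
    (sinh_arcosh (one_le_mink_Pt s h s' h')).symm
  have hnum :
      cosh h * (cosh (s' - s) * cosh h * cosh h' - sinh h * sinh h') - cosh (s' - s) * cosh h' =
        sinh h * (cosh (s' - s) * sinh h * cosh h' - cosh h * sinh h') := by
    linear_combination (cosh (s' - s) * cosh h') * cosh_sq h
  rw [hangle, hfoot, hbase, hsinh, hsinhd, mink_Pt, hnum,
    mul_div_mul_left _ _ (sinh_pos_iff.2 hh).ne']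

lemma cos_arccos_div_of_sq_eq {u w r : ℝ} (hr : 0 < r) (h : r ^ 2 = u ^ 2 + w ^ 2) :
    cos (arccos (u / r)) = u / r := by
  have hu : |u| ≤ r := abs_le_of_sq_le_sq (by nlinarith) hr.le
  rw [abs_le] at hu
  exact cos_arccos (by rw [le_div_iff₀ hr]; linarith) (by rw [div_le_one hr]; linarith)

lemma sin_arccos_div_of_sq_eq {u w r : ℝ} (hr : 0 < r) (h : r ^ 2 = u ^ 2 + w ^ 2) :
    sin (arccos (u / r)) = |w| / r := by
  rw [sin_arccos, show 1 - (u / r) ^ 2 = (w / r) ^ 2 by field_simp; linarith, sqrt_sq_eq_abs,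
    abs_div, abs_of_pos hr]

lemma sin_div_one_sub_cos_arccos_add_arccos {u v p q r : ℝ} (hr : 0 < r) (hp : 0 ≤ p)
    (hq : 0 ≤ q) (hu : r ^ 2 = u ^ 2 + p ^ 2) (hv : r ^ 2 = v ^ 2 + q ^ 2) :
    sin (arccos (u / r) + arccos (v / r)) / (1 - cos (arccos (u / r) + arccos (v / r))) =
      (p * v + u * q) / (r ^ 2 - u * v + p * q) := by
  have hsin : sin (arccos (u / r) + arccos (v / r)) = (p * v + u * q) / r ^ 2 := by
    rw [sin_add, cos_arccos_div_of_sq_eq hr hu, cos_arccos_div_of_sq_eq hr hv,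
      sin_arccos_div_of_sq_eq hr hu, sin_arccos_div_of_sq_eq hr hv, abs_of_nonneg hp,
      abs_of_nonneg hq]
    field_simp
  have hcos : 1 - cos (arccos (u / r) + arccos (v / r)) = (r ^ 2 - u * v + p * q) / r ^ 2 := by
    rw [cos_add, cos_arccos_div_of_sq_eq hr hu, cos_arccos_div_of_sq_eq hr hv,
      sin_arccos_div_of_sq_eq hr hu, sin_arccos_div_of_sq_eq hr hv, abs_of_nonneg hp,
      abs_of_nonneg hq]
    field_simp
    ring
  rw [hsin, hcos, div_div_div_cancel_right₀ (by positivity)]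

lemma arccos_div_mem_Ioo {u w r : ℝ} (hr : 0 < r) (hw : w ≠ 0) (h : r ^ 2 = u ^ 2 + w ^ 2) :
    arccos (u / r) ∈ Set.Ioo 0 π := by
  have hu : |u| < r := abs_lt_of_sq_lt_sq (by nlinarith [sq_pos_of_ne_zero hw]) hr.le
  rw [abs_lt] at hu
  exact ⟨arccos_pos.2 (by rw [div_lt_one hr]; linarith),
    arccos_lt_pi.2 (by rw [lt_div_iff₀ hr]; linarith)⟩

lemma pi_sub_eq_two_mul_arctan {φ : ℝ} (h0 : 0 < φ) (h2 : φ < 2 * π) :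
    π - φ = 2 * arctan (sin φ / (1 - cos φ)) := by
  set γ := π / 2 - φ / 2 with hγ
  have hcos : 0 < cos γ := cos_pos_of_mem_Ioo ⟨by linarith, by linarith⟩
  have hφ : φ = π - 2 * γ := by ring
  have hcot : sin φ / (1 - cos φ) = tan γ := by
    rw [hφ, sin_pi_sub, cos_pi_sub, sin_two_mul, cos_two_mul, tan_eq_sin_div_cos]
    field_simp
    ring
  rw [hcot, arctan_tan (by rw [hγ]; linarith) (by rw [hγ]; linarith)]
  ring

lemma arctan_le_arsinh {t : ℝ} (ht : 0 ≤ t) : arctan t ≤ arsinh t := by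
  have hderiv (x : ℝ) : HasDerivAt (fun x => arsinh x - arctan x)
      ((√(1 + x ^ 2))⁻¹ - 1 / (1 + x ^ 2)) x :=
    (hasDerivAt_arsinh x).sub (hasDerivAt_arctan x)
  have hmono : Monotone (fun x => arsinh x - arctan x) := by
    refine monotone_of_deriv_nonneg (fun x => (hderiv x).differentiableAt) fun x => ?_
    rw [(hderiv x).deriv, sub_nonneg, one_div]
    have h1 : 1 ≤ 1 + x ^ 2 := by nlinarith
    exact inv_anti₀ (by positivity) (sqrt_le_self_iff.2 (Or.inr h1))
  simpa using hmono ht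

theorem trapezoid_area_eq {s₁ s₂ h₁ h₂ : ℝ} (hs : s₁ < s₂) (hh₁ : 0 < h₁) (hh₂ : 0 < h₂) :
    π - hangle (Pt s₁ h₁) (Pt s₁ 0) (Pt s₂ h₂) - hangle (Pt s₂ h₂) (Pt s₁ h₁) (Pt s₂ 0) =
      2 * arctan (sinh (s₂ - s₁) * (sinh h₁ + sinh h₂) /
        ((1 + cosh (s₂ - s₁)) * (1 + cosh (h₁ - h₂)))) := by
  set d := hdist (Pt s₁ h₁) (Pt s₂ h₂)
  set u := cosh (s₂ - s₁) * sinh h₁ * cosh h₂ - cosh h₁ * sinh h₂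
  set v := cosh (s₂ - s₁) * sinh h₂ * cosh h₁ - cosh h₂ * sinh h₁
  have hσ : 0 < sinh (s₂ - s₁) := sinh_pos_iff.2 (sub_pos.2 hs)
  have hru : sinh d ^ 2 = u ^ 2 + (cosh h₂ * sinh (s₂ - s₁)) ^ 2 := sinh_hdist_Pt_sq ..
  have hrv : sinh d ^ 2 = v ^ 2 + (cosh h₁ * sinh (s₂ - s₁)) ^ 2 := by
    have h := sinh_hdist_Pt_sq s₂ h₂ s₁ h₁
    rw [hdist_comm, ← neg_sub s₂ s₁, cosh_neg, sinh_neg] at h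
    linear_combination h
  have hd : cosh d = cosh (s₂ - s₁) * cosh h₁ * cosh h₂ - sinh h₁ * sinh h₂ :=
    (cosh_hdist_Pt ..).trans (mink_Pt ..)
  have hr : 0 < sinh d := by
    refine lt_of_le_of_ne (sinh_nonneg_iff.2 (hdist_Pt_nonneg ..)) fun hzero => ?_
    nlinarith [mul_pos (cosh_pos h₂) hσ]
  have hc : 0 < cosh d - 1 := by
    have := one_lt_cosh.2 (sinh_pos_iff.1 hr).ne'
    linarith
  have hθ₂ : hangle (Pt s₂ h₂) (Pt s₁ h₁) (Pt s₂ 0) = arccos (v / sinh d) := by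
    rw [hangle_comm, hangle_Pt_foot_eq_arccos hh₂, hdist_comm, ← neg_sub s₂ s₁, cosh_neg]
  obtain ⟨hθ₁0, hθ₁π⟩ := arccos_div_mem_Ioo hr (by positivity) hru
  obtain ⟨hθ₂0, hθ₂π⟩ := arccos_div_mem_Ioo hr (by positivity) hrv
  rw [hangle_Pt_foot_eq_arccos hh₁, hθ₂, sub_sub,
    pi_sub_eq_two_mul_arctan (by linarith) (by linarith)]
  have hnum : cosh h₂ * sinh (s₂ - s₁) * v + u * (cosh h₁ * sinh (s₂ - s₁)) =
      sinh (s₂ - s₁) * (sinh h₁ + sinh h₂) * (cosh d - 1) := by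
    rw [hd]
    linear_combination (-sinh h₂ * sinh (s₂ - s₁)) * cosh_sq h₁
      - sinh h₁ * sinh (s₂ - s₁) * cosh_sq h₂
  have hden : sinh d ^ 2 - u * v + cosh h₂ * sinh (s₂ - s₁) * (cosh h₁ * sinh (s₂ - s₁)) =
      (1 + cosh (s₂ - s₁)) * (1 + cosh (h₁ - h₂)) * (cosh d - 1) := by
    rw [sinh_sq, hd, cosh_sub h₁ h₂]
    linear_combination (sinh h₂ ^ 2 - cosh h₂ ^ 2) * cosh (s₂ - s₁) * cosh_sq h₁
      - cosh (s₂ - s₁) * cosh_sq h₂ - cosh h₁ * cosh h₂ * cosh_sq (s₂ - s₁)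
  rw [sin_div_one_sub_cos_arccos_add_arccos hr (by positivity) (by positivity) hru hrv, hnum,
    hden, mul_div_mul_right _ _ hc.ne']

lemma sq_le_cosh_hdist_sub_one_div_two (s₁ s₂ h₁ h₂ : ℝ) :
    (sinh (s₂ - s₁) * (sinh h₁ + sinh h₂) / ((1 + cosh (s₂ - s₁)) * (1 + cosh (h₁ - h₂)))) ^ 2 ≤
      (cosh (hdist (Pt s₁ h₁) (Pt s₂ h₂)) - 1) / 2 := by
  set D := cosh (s₂ - s₁)
  set w := 1 + cosh (h₁ - h₂) with hw_def
  set c := cosh (hdist (Pt s₁ h₁) (Pt s₂ h₂)) with hc_def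
  have hD : 1 ≤ D := one_le_cosh _
  have hw : 2 ≤ w := by linarith [one_le_cosh (h₁ - h₂)]
  have hab : 0 < cosh h₁ * cosh h₂ := mul_pos (cosh_pos _) (cosh_pos _)
  have hc : c - 1 = (D - 1) * (cosh h₁ * cosh h₂) + (w - 2) := by
    rw [hc_def, cosh_hdist_Pt, mink_Pt, hw_def, cosh_sub h₁ h₂]; ring
  have hsum_sq : (sinh h₁ + sinh h₂) ^ 2 = w * (cosh (h₁ + h₂) - 1) := by
    rw [hw_def, cosh_sub, cosh_add]
    linear_combination (-cosh h₂ ^ 2) * cosh_sq h₁ - (1 + sinh h₁ ^ 2) * cosh_sq h₂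
  have hE : cosh (h₁ + h₂) - 1 ≤ cosh h₁ * cosh h₂ * w := by
    have : cosh h₁ * cosh h₂ * w - (cosh (h₁ + h₂) - 1) = cosh h₁ * cosh h₂ * (w - 2) + w := by
      rw [hw_def, cosh_add, cosh_sub]; ring
    nlinarith
  have key : 2 * (sinh (s₂ - s₁) * (sinh h₁ + sinh h₂)) ^ 2 ≤ (c - 1) * ((1 + D) * w) ^ 2 :=
    calc 2 * (sinh (s₂ - s₁) * (sinh h₁ + sinh h₂)) ^ 2
        = 2 * ((D - 1) * (D + 1)) * w * (cosh (h₁ + h₂) - 1) := by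
          rw [mul_pow, sinh_sq, hsum_sq]; ring
      _ ≤ 2 * ((D - 1) * (D + 1)) * w * (cosh h₁ * cosh h₂ * w) := by gcongr
      _ = (2 * ((D - 1) * (cosh h₁ * cosh h₂))) * (1 + D) * w ^ 2 := by ring
      _ ≤ ((c - 1) * (1 + D)) * (1 + D) * w ^ 2 := by
          gcongr ?_ * _ * _
          have hD1 : 0 ≤ D - 1 := by linarith
          nlinarith [mul_nonneg (mul_nonneg hD1 hab.le) hD1,
            mul_nonneg (by linarith : (0:ℝ) ≤ w - 2) (by linarith : (0:ℝ) ≤ 1 + D)]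
      _ = (c - 1) * ((1 + D) * w) ^ 2 := by ring
  rw [div_pow, div_le_div_iff₀ (by positivity) two_pos]
  linarith

theorem two_mul_arsinh_le_hdist (s₁ s₂ h₁ h₂ : ℝ) :
    2 * arsinh (sinh (s₂ - s₁) * (sinh h₁ + sinh h₂) /
        ((1 + cosh (s₂ - s₁)) * (1 + cosh (h₁ - h₂)))) ≤ hdist (Pt s₁ h₁) (Pt s₂ h₂) := by
  set d := hdist (Pt s₁ h₁) (Pt s₂ h₂)
  set T := sinh (s₂ - s₁) * (sinh h₁ + sinh h₂) / ((1 + cosh (s₂ - s₁)) * (1 + cosh (h₁ - h₂)))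
  have hd : 0 ≤ d := hdist_Pt_nonneg ..
  rcases le_or_gt T 0 with hT | hT
  · linarith [arsinh_nonpos_iff.2 hT]
  suffices T ≤ sinh (d / 2) by
    have := arsinh_le_arsinh.2 this
    rw [arsinh_sinh] at this
    linarith
  have hhalf : sinh (d / 2) ^ 2 = (cosh d - 1) / 2 := by
    have := cosh_two_mul (d / 2)
    rw [mul_div_cancel₀ d two_ne_zero, cosh_sq] at this
    linarith
  refine (abs_le_of_sq_le_sq ?_ (sinh_nonneg_iff.2 (by linarith))).trans' (le_abs_self T)
  rw [hhalf]
  exact sq_le_cosh_hdist_sub_one_div_two s₁ s₂ h₁ h₂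

theorem trapezoid_area_le_hdist {s₁ s₂ h₁ h₂ : ℝ} (hs : s₁ < s₂) (hh₁ : 0 < h₁) (hh₂ : 0 < h₂) :
    π - hangle (Pt s₁ h₁) (Pt s₁ 0) (Pt s₂ h₂) - hangle (Pt s₂ h₂) (Pt s₁ h₁) (Pt s₂ 0) ≤
      hdist (Pt s₁ h₁) (Pt s₂ h₂) := by
  have hδ : 0 < s₂ - s₁ := sub_pos.2 hs
  rw [trapezoid_area_eq hs hh₁ hh₂]
  refine le_trans ?_ (two_mul_arsinh_le_hdist s₁ s₂ h₁ h₂)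
  gcongr
  exact arctan_le_arsinh (by positivity)

lemma sum_Icc_sub_add_eq_sum_range (x : ℝ) (f g : ℕ → ℝ) (m : ℕ) :
    ∑ k ∈ Finset.Icc 1 m, (x - (g k + f k)) =
      ∑ i ∈ Finset.range (m + 1), (x - f i - g (i + 1)) - (x - f 0 - g (m + 1)) := by
  induction m with
  | zero => simp
  | succ m ih =>
    rw [Finset.sum_Icc_succ_top (by omega), ih, Finset.sum_range_succ _ (m + 1)]
    ring

/-- Let `B₀ A₀ A₁ … A_{m+1} B_{m+1}` be a convex polygon in the hyperbolic plane with right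
angles at `B₀` and `B_{m+1}`, where `A_i = Pt (s i) (h i)` lies at height `h i > 0` over the
point `B_i = Pt (s i) 0` of the base line, `s` strictly increasing, and `B₀ = Pt (s 0) 0`,
`B_{m+1} = Pt (s (m+1)) 0`.  Convexity at each interior vertex `A_k` (`1 ≤ k ≤ m`) is
expressed by the interior angle `α_k` splitting as the sum of the two angles cut off by the
perpendicular `A_k B_k` (the foot lies inside the angle and the angle is at most `π`).
With `L = |A₀A₁| + ⋯ + |A_m A_{m+1}|`, we have `∑_{k=1}^m (π - α_k) ≤ π + L`. -/
theorem convex_polygon_turning_bound (m : ℕ) (s h : ℕ → ℝ)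
    (hs : ∀ i ≤ m, s i < s (i + 1))
    (hh : ∀ i ≤ m + 1, 0 < h i)
    (hconvex : ∀ k, 1 ≤ k → k ≤ m →
      hangle (Pt (s k) (h k)) (Pt (s (k - 1)) (h (k - 1))) (Pt (s (k + 1)) (h (k + 1))) =
        hangle (Pt (s k) (h k)) (Pt (s (k - 1)) (h (k - 1))) (Pt (s k) 0) +
        hangle (Pt (s k) (h k)) (Pt (s k) 0) (Pt (s (k + 1)) (h (k + 1)))) :
    ∑ k ∈ Finset.Icc 1 m,
        (π - hangle (Pt (s k) (h k)) (Pt (s (k - 1)) (h (k - 1))) (Pt (s (k + 1)) (h (k + 1))))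
      ≤ π + ∑ i ∈ Finset.range (m + 1),
          hdist (Pt (s i) (h i)) (Pt (s (i + 1)) (h (i + 1))) := by
  set A : ℕ → ℝ × ℝ × ℝ := fun i => Pt (s i) (h i)
  set B : ℕ → ℝ × ℝ × ℝ := fun i => Pt (s i) 0
  have htrap : ∀ i ∈ Finset.range (m + 1),
      π - hangle (A i) (B i) (A (i + 1)) - hangle (A (i + 1)) (A i) (B (i + 1)) ≤
        hdist (A i) (A (i + 1)) := fun i hi => by
    have hi := Finset.mem_range_succ_iff.1 hi
    exact trapezoid_area_le_hdist (hs i hi) (hh i (by omega)) (hh (i + 1) (by omega))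
  calc _ = ∑ k ∈ Finset.Icc 1 m,
          (π - (hangle (A k) (A (k - 1)) (B k) + hangle (A k) (B k) (A (k + 1)))) :=
        Finset.sum_congr rfl fun k hk => by
          obtain ⟨hk1, hkm⟩ := Finset.mem_Icc.1 hk
          rw [hconvex k hk1 hkm]
    _ = ∑ i ∈ Finset.range (m + 1), (π - hangle (A i) (B i) (A (i + 1)) -
          hangle (A (i + 1)) (A i) (B (i + 1))) -
          (π - hangle (A 0) (B 0) (A 1) - hangle (A (m + 1)) (A m) (B (m + 1))) :=
        sum_Icc_sub_add_eq_sum_range π (fun i => hangle (A i) (B i) (A (i + 1)))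
          (fun k => hangle (A k) (A (k - 1)) (B k)) m
    _ ≤ ∑ i ∈ Finset.range (m + 1), hdist (A i) (A (i + 1)) - (π - π - π) := by
        gcongr ?_ - ?_
        · exact Finset.sum_le_sum htrap
        · linarith [hangle_le_pi (A 0) (B 0) (A 1), hangle_le_pi (A (m + 1)) (A m) (B (m + 1))]
    _ = _ := by ring
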